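/- arXiv:math/0610627 — 6 statements merged into one kernel-verified Lean document; each statement's English description precedes it below -/
import Mathlib

section
/- Define a mutation step on triples of integers: μ₁(a,b,c) = (a,b,ab−c), μ₂(a,b,c) = (a,c,ac−b), μ₃(a,b,c) = (b,c,bc−a). Let (a,b,c) satisfy 2 ≤ a ≤ b ≤ c and ab ≥ 2c. Then for any triple (a',b',c') obtained from (a,b,c) by a finite sequence of these mutation steps (applied after reordering parameters increasingly at each step), all entries are positive, i.e. the quiver remains cyclic. -/
/-- One mutation step on a triple of integers: replace one entry `x` by
(product of the other two) − `x`. -/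
def mutStep (t s : ℤ × ℤ × ℤ) : Prop :=
  s = (t.1, t.2.1, t.1 * t.2.1 - t.2.2) ∨
  s = (t.1, t.1 * t.2.2 - t.2.1, t.2.2) ∨
  s = (t.2.1 * t.2.2 - t.1, t.2.1, t.2.2)

/-- A triple is mutation-acyclic if some finite sequence of mutations
reaches a triple with a nonpositive entry (an acyclic quiver). -/
def MutationAcyclic (t : ℤ × ℤ × ℤ) : Prop :=
  ∃ s, Relation.ReflTransGen mutStep t s ∧ (s.1 ≤ 0 ∨ s.2.1 ≤ 0 ∨ s.2.2 ≤ 0)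

/-- A triple is mutation-cyclic if every quiver in its mutation class is cyclic. -/
def MutationCyclic (t : ℤ × ℤ × ℤ) : Prop := ¬ MutationAcyclic t

/-- The invariant predicate on sorted triples: triples reachable from a root. -/
inductive Good : ℤ → ℤ → ℤ → Prop where
  | root (a b c : ℤ) : 2 ≤ a → a ≤ b → b ≤ c → 2 * c ≤ a * b → Good a b c
  | up1 (a b c : ℤ) : Good a b c → c ≤ a * b - c → Good a b (a * b - c)
  | up2 (a b c : ℤ) : Good a b c → Good a c (a * c - b)
  | up3 (a b c : ℤ) : Good a b c → Good b c (b * c - a)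

lemma good_bounds {a b c : ℤ} (h : Good a b c) : 2 ≤ a ∧ a ≤ b ∧ b ≤ c := by
  induction h with
  | root a b c h1 h2 h3 h4 => exact ⟨h1, h2, h3⟩
  | up1 a b c h hc ih => exact ⟨ih.1, ih.2.1, le_trans ih.2.2 hc⟩
  | up2 a b c h ih =>
      obtain ⟨h1, h2, h3⟩ := ih
      refine ⟨h1, le_trans h2 h3, ?_⟩
      nlinarith
  | up3 a b c h ih =>
      obtain ⟨h1, h2, h3⟩ := ih
      refine ⟨le_trans h1 h2, h3, ?_⟩
      nlinarith

def GoodT (t : ℤ × ℤ × ℤ) : Prop := Good t.1 t.2.1 t.2.2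

/-- Sort a triple in increasing order. -/
def srt (t : ℤ × ℤ × ℤ) : ℤ × ℤ × ℤ :=
  (min t.1 (min t.2.1 t.2.2),
   min (max t.1 t.2.1) (min (max t.2.1 t.2.2) (max t.1 t.2.2)),
   max t.1 (max t.2.1 t.2.2))

lemma srt_perm {a b c : ℤ} (h1 : a ≤ b) (h2 : b ≤ c) :
    srt (a, b, c) = (a, b, c) ∧ srt (a, c, b) = (a, b, c) ∧ srt (b, a, c) = (a, b, c) ∧
    srt (b, c, a) = (a, b, c) ∧ srt (c, a, b) = (a, b, c) ∧ srt (c, b, a) = (a, b, c) := by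
  simp only [srt, Prod.mk.injEq]
  omega

lemma srt_swap12 (x y z : ℤ) : srt (x, y, z) = srt (y, x, z) := by
  simp only [srt, Prod.mk.injEq]; omega

lemma srt_swap23 (x y z : ℤ) : srt (x, y, z) = srt (x, z, y) := by
  simp only [srt, Prod.mk.injEq]; omega

lemma srt_rot (x y z : ℤ) : srt (x, y, z) = srt (y, z, x) := by
  simp only [srt, Prod.mk.injEq]; omega

/-- Mutation at the maximal element preserves Good (after sorting). -/
lemma good_mut_max {a b c : ℤ} (h : Good a b c) : GoodT (srt (a, b, a * b - c)) := by
  induction h with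
  | root a b c h1 h2 h3 h4 =>
      have hc : c ≤ a * b - c := by omega
      have hb : b ≤ a * b - c := le_trans h3 hc
      rw [(srt_perm h2 hb).1]
      exact Good.up1 a b c (Good.root a b c h1 h2 h3 h4) hc
  | up1 a b c h hc ih =>
      have hb := good_bounds h
      have : a * b - (a * b - c) = c := by ring
      rw [this, (srt_perm hb.2.1 hb.2.2).1]
      exact h
  | up2 a b c h ih =>
      have hb := good_bounds h
      have : a * c - (a * c - b) = b := by ring
      rw [this, (srt_perm hb.2.1 hb.2.2).2.1]
      exact h
  | up3 a b c h ih =>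
      have hb := good_bounds h
      have : b * c - (b * c - a) = a := by ring
      rw [this, (srt_perm hb.2.1 hb.2.2).2.2.2.1]
      exact h

lemma good_step (x y z : ℤ) (h : GoodT (srt (x, y, z))) : GoodT (srt (x, y, x * y - z)) := by
  rcases le_total x y with hxy | hxy
  · rcases le_total z x with h1 | h1
    · -- z ≤ x ≤ y : z is min
      rw [(srt_perm h1 hxy).2.2.2.1] at h
      have hb := good_bounds h
      have h2 : y ≤ x * y - z := by nlinarith [hb.1, hb.2.1, hb.2.2]
      rw [(srt_perm hxy h2).1]
      exact Good.up3 z x y h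
    · rcases le_total z y with h2 | h2
      · -- x ≤ z ≤ y : z is mid
        rw [(srt_perm h1 h2).2.1] at h
        have hb := good_bounds h
        have h3 : y ≤ x * y - z := by nlinarith [hb.1, hb.2.1, hb.2.2]
        rw [(srt_perm hxy h3).1]
        exact Good.up2 x z y h
      · -- x ≤ y ≤ z : z is max
        rw [(srt_perm hxy h2).1] at h
        exact good_mut_max h
  · rw [srt_swap12 x y z, srt_swap12 x y (x * y - z), mul_comm x y] at *
    rcases le_total z y with h1 | h1
    · rw [(srt_perm h1 hxy).2.2.2.1] at h
      have hb := good_bounds h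
      have h2 : x ≤ y * x - z := by nlinarith [hb.1, hb.2.1, hb.2.2]
      rw [(srt_perm hxy h2).1]
      exact Good.up3 z y x h
    · rcases le_total z x with h2 | h2
      · rw [(srt_perm h1 h2).2.1] at h
        have hb := good_bounds h
        have h3 : x ≤ y * x - z := by nlinarith [hb.1, hb.2.1, hb.2.2]
        rw [(srt_perm hxy h3).1]
        exact Good.up2 y z x h
      · rw [(srt_perm hxy h2).1] at h
        exact good_mut_max h

lemma good_mutStep {t s : ℤ × ℤ × ℤ} (hm : mutStep t s) (h : GoodT (srt t)) :
    GoodT (srt s) := by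
  obtain ⟨x, y, z⟩ := t
  rcases hm with rfl | rfl | rfl
  · exact good_step x y z h
  · rw [srt_swap23]
    rw [srt_swap23] at h
    exact good_step x z y h
  · rw [srt_rot x y z] at h
    rw [srt_rot]
    exact good_step y z x h

theorem stmt_6 (a b c : ℤ) (ha : 2 ≤ a) (hab : a ≤ b) (hbc : b ≤ c)
    (hroot : a * b ≥ 2 * c) :
    ∀ s : ℤ × ℤ × ℤ, Relation.ReflTransGen mutStep (a, b, c) s →
      0 < s.1 ∧ 0 < s.2.1 ∧ 0 < s.2.2 := by
  have key : ∀ s : ℤ × ℤ × ℤ, Relation.ReflTransGen mutStep (a, b, c) s → GoodT (srt s) := by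
    intro s hs
    induction hs with
    | refl =>
        rw [(srt_perm hab hbc).1]
        exact Good.root a b c ha hab hbc hroot
    | tail _ hm ih => exact good_mutStep hm ih
  intro s hs
  have h := good_bounds (key s hs)
  obtain ⟨x, y, z⟩ := s
  simp [srt] at h
  dsimp only
  omega
end

section
/- Let (a,b,c) be a root, i.e. integers with 2 ≤ a ≤ b ≤ c and ab ≥ 2c. Then for any triple obtained from (a,b,c) by a finite sequence of mutations, the sum of its entries is at least a + b + c. -/
def sort3 (t : ℤ × ℤ × ℤ) : ℤ × ℤ × ℤ :=
  (min (min t.1 t.2.1) t.2.2,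
   t.1 + t.2.1 + t.2.2 - min (min t.1 t.2.1) t.2.2 - max (max t.1 t.2.1) t.2.2,
   max (max t.1 t.2.1) t.2.2)

lemma sort3_swap12 (p q r : ℤ) : sort3 (p, q, r) = sort3 (q, p, r) := by
  simp only [sort3, Prod.mk.injEq]; omega

lemma sort3_swap23 (p q r : ℤ) : sort3 (p, q, r) = sort3 (p, r, q) := by
  simp only [sort3, Prod.mk.injEq]; omega

lemma sort3_of_sorted (p q r : ℤ) (h1 : p ≤ q) (h2 : q ≤ r) : sort3 (p, q, r) = (p, q, r) := by
  simp only [sort3, Prod.mk.injEq]; omega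

lemma sort3_sum (t : ℤ × ℤ × ℤ) :
    (sort3 t).1 + (sort3 t).2.1 + (sort3 t).2.2 = t.1 + t.2.1 + t.2.2 := by
  simp only [sort3]; ring

def GoodF (S0 : ℤ) : ℕ → ℤ × ℤ × ℤ → Prop
  | 0, _ => False
  | (n+1), t =>
      2 ≤ t.1 ∧ t.1 ≤ t.2.1 ∧ t.2.1 ≤ t.2.2 ∧ S0 ≤ t.1 + t.2.1 + t.2.2 ∧
        (2 * t.2.2 ≤ t.1 * t.2.1 ∨
          (t.2.2 + 2 ≤ t.1 * t.2.1 ∧ t.1 * t.2.1 < 2 * t.2.2 ∧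
            GoodF S0 n (sort3 (t.1, t.2.1, t.1 * t.2.1 - t.2.2))))

lemma goodF_succ (S0 : ℤ) (n : ℕ) (x y z : ℤ) :
    GoodF S0 (n+1) (x, y, z) ↔
      (2 ≤ x ∧ x ≤ y ∧ y ≤ z ∧ S0 ≤ x + y + z ∧
        (2 * z ≤ x * y ∨
          (z + 2 ≤ x * y ∧ x * y < 2 * z ∧ GoodF S0 n (sort3 (x, y, x * y - z))))) := Iff.rfl

/-- Mutation at the maximum entry. -/
lemma L1 (S0 : ℤ) (n : ℕ) (x y z : ℤ) (h : GoodF S0 (n+1) (x, y, z)) :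
    ∃ m, GoodF S0 m (sort3 (x, y, x * y - z)) := by
  obtain ⟨hx, hxy, hyz, hs, hor⟩ := (goodF_succ S0 n x y z).1 h
  have hz2 : 2 ≤ z := by linarith
  rcases hor with hroot | ⟨h1, h2, h3⟩
  · -- x*y ≥ 2z, new max x*y - z ≥ z
    have hzz' : z ≤ x * y - z := by linarith
    refine ⟨n + 2, ?_⟩
    rw [sort3_of_sorted _ _ _ hxy (by linarith), goodF_succ]
    refine ⟨hx, hxy, by linarith, by linarith, ?_⟩
    by_cases hc : 2 * (x * y - z) ≤ x * y
    · exact Or.inl hc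
    · refine Or.inr ⟨by linarith, by linarith, ?_⟩
      rw [show x * y - (x * y - z) = z by ring, sort3_of_sorted _ _ _ hxy hyz]
      exact h
  · exact ⟨n, h3⟩

/-- Mutation at the middle entry. -/
lemma L2 (S0 : ℤ) (n : ℕ) (x y z : ℤ) (h : GoodF S0 (n+1) (x, y, z)) :
    ∃ m, GoodF S0 m (sort3 (x, x * z - y, z)) := by
  obtain ⟨hx, hxy, hyz, hs, hor⟩ := (goodF_succ S0 n x y z).1 h
  have h2z : 2 * z ≤ x * z := mul_le_mul_of_nonneg_right hx (by linarith)
  have hzz' : z ≤ x * z - y := by linarith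
  refine ⟨n + 2, ?_⟩
  rw [sort3_swap23, sort3_of_sorted _ _ _ (by linarith) hzz', goodF_succ]
  refine ⟨hx, by linarith, hzz', by linarith, ?_⟩
  by_cases hc : 2 * (x * z - y) ≤ x * z
  · exact Or.inl hc
  · refine Or.inr ⟨by linarith, by linarith, ?_⟩
    rw [show x * z - (x * z - y) = y by ring, sort3_swap23, sort3_of_sorted _ _ _ hxy hyz]
    exact h

/-- Mutation at the minimum entry. -/
lemma L3 (S0 : ℤ) (n : ℕ) (x y z : ℤ) (h : GoodF S0 (n+1) (x, y, z)) :
    ∃ m, GoodF S0 m (sort3 (y * z - x, y, z)) := by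
  obtain ⟨hx, hxy, hyz, hs, hor⟩ := (goodF_succ S0 n x y z).1 h
  have h2z : 2 * z ≤ y * z := mul_le_mul_of_nonneg_right (by linarith) (by linarith)
  have hzz' : z ≤ y * z - x := by linarith
  refine ⟨n + 2, ?_⟩
  rw [sort3_swap12, sort3_swap23, sort3_of_sorted _ _ _ hyz hzz', goodF_succ]
  refine ⟨by linarith, hyz, hzz', by linarith, ?_⟩
  by_cases hc : 2 * (y * z - x) ≤ y * z
  · exact Or.inl hc
  · refine Or.inr ⟨by linarith, by linarith, ?_⟩
    rw [show y * z - (y * z - x) = x by ring, sort3_swap23, sort3_swap12,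
      sort3_of_sorted _ _ _ hxy hyz]
    exact h

/-- Mutating the third coordinate preserves the invariant, regardless of ordering. -/
lemma key (S0 u v w : ℤ) (n : ℕ) (h : GoodF S0 n (sort3 (u, v, w))) :
    ∃ m, GoodF S0 m (sort3 (u, v, u * v - w)) := by
  cases n with
  | zero => exact (h : False).elim
  | succ n =>
    rcases le_total u v with huv | hvu
    · rcases le_total v w with hvw | hwv
      · -- u ≤ v ≤ w
        rw [sort3_of_sorted _ _ _ huv hvw] at h
        exact L1 S0 n u v w h
      · rcases le_total u w with huw | hwu
        · -- u ≤ w ≤ v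
          rw [sort3_swap23, sort3_of_sorted _ _ _ huw hwv] at h
          have := L2 S0 n u w v h
          rwa [sort3_swap23 u (u * v - w) v] at this
        · -- w ≤ u ≤ v
          rw [sort3_swap23, sort3_swap12, sort3_of_sorted _ _ _ hwu huv] at h
          have := L3 S0 n w u v h
          rwa [show u * v - w = u * v - w from rfl, sort3_swap12, sort3_swap23] at this
    · rcases le_total u w with huw | hwu
      · -- v ≤ u ≤ w
        rw [sort3_swap12, sort3_of_sorted _ _ _ hvu huw] at h
        have := L1 S0 n v u w h
        rwa [show v * u = u * v from mul_comm v u, sort3_swap12] at this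
      · rcases le_total v w with hvw | hwv
        · -- v ≤ w ≤ u
          rw [sort3_swap12, sort3_swap23, sort3_of_sorted _ _ _ hvw hwu] at h
          have := L2 S0 n v w u h
          rwa [show v * u = u * v from mul_comm v u, sort3_swap23, sort3_swap12] at this
        · -- w ≤ v ≤ u
          rw [sort3_swap23, sort3_swap12, sort3_swap23,
            sort3_of_sorted _ _ _ hwv hvu] at h
          have := L3 S0 n w v u h
          rwa [show v * u = u * v from mul_comm v u, sort3_swap12, sort3_swap23, sort3_swap12] at this

lemma mut_inv (S0 : ℤ) (t s : ℤ × ℤ × ℤ) (hstep : mutStep t s)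
    (hi : ∃ n, GoodF S0 n (sort3 t)) : ∃ n, GoodF S0 n (sort3 s) := by
  obtain ⟨n, hn⟩ := hi
  obtain ⟨t1, t2, t3⟩ := t
  rcases hstep with h | h | h <;> subst h
  · exact key S0 t1 t2 t3 n hn
  · rw [sort3_swap23]
    refine key S0 t1 t3 t2 n ?_
    rwa [sort3_swap23 t1 t3 t2]
  · rw [sort3_swap12, sort3_swap23]
    refine key S0 t2 t3 t1 n ?_
    rwa [sort3_swap23 t2 t3 t1, sort3_swap12 t2 t1 t3]

theorem stmt_7 (a b c : ℤ) (ha : 2 ≤ a) (hab : a ≤ b) (hbc : b ≤ c)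
    (hroot : a * b ≥ 2 * c) :
    ∀ s : ℤ × ℤ × ℤ, Relation.ReflTransGen mutStep (a, b, c) s →
      s.1 + s.2.1 + s.2.2 ≥ a + b + c := by
  intro s hs
  have hinv : ∃ n, GoodF (a + b + c) n (sort3 s) := by
    induction hs with
    | refl =>
      refine ⟨1, ?_⟩
      rw [show sort3 ((a, b, c) : ℤ × ℤ × ℤ) = (a, b, c) from
        sort3_of_sorted a b c hab hbc, goodF_succ]
      exact ⟨ha, hab, hbc, le_refl _, Or.inl hroot⟩
    | tail _ hstep ih => exact mut_inv (a + b + c) _ _ hstep ih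
  obtain ⟨n, hn⟩ := hinv
  cases n with
  | zero => exact (hn : False).elim
  | succ n =>
    have hsum : a + b + c ≤ (sort3 s).1 + (sort3 s).2.1 + (sort3 s).2.2 :=
      (hn : GoodF _ (n+1) (sort3 s)).2.2.2.1
    rw [sort3_sum] at hsum
    exact hsum
end

section
/- Let b, c be integers with 2 ≤ b ≤ c. The cyclic triple (2, b, c) is mutation-cyclic if and only if b = c. -/
open Relation

def markovQuantity (t : ℤ × ℤ × ℤ) : ℤ :=
  t.1 ^ 2 + t.2.1 ^ 2 + t.2.2 ^ 2 - t.1 * t.2.1 * t.2.2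

lemma markovQuantity_eq_of_mutStep {t s : ℤ × ℤ × ℤ} (h : mutStep t s) :
    markovQuantity s = markovQuantity t := by
  obtain ⟨x, y, z⟩ := t
  rcases h with rfl | rfl | rfl <;> simp only [markovQuantity] <;> ring

lemma two_le_mul_sub_of_markov_eq_four {x y z : ℤ} (hx : 2 ≤ x) (hy : 2 ≤ y) (hz : 2 ≤ z)
    (h : x ^ 2 + y ^ 2 + z ^ 2 - x * y * z = 4) : 2 ≤ x * y - z := by
  -- `z` and its mutation `x * y - z` are the two roots of `Z² - xyZ + (x² + y² - 4)`
  have hprod : (x * y - z) * z = x ^ 2 + y ^ 2 - 4 := by linear_combination -h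
  have hpos : 0 < x * y - z := by nlinarith
  have hne : x * y - z ≠ 1 := by
    intro h1
    have h3 : x ^ 2 - x * y + y ^ 2 = 3 := by nlinarith
    nlinarith [sq_nonneg (x - y)]
  omega

def IsMarkovFour (t : ℤ × ℤ × ℤ) : Prop :=
  2 ≤ t.1 ∧ 2 ≤ t.2.1 ∧ 2 ≤ t.2.2 ∧ markovQuantity t = 4

lemma IsMarkovFour.of_mutStep {t s : ℤ × ℤ × ℤ} (ht : IsMarkovFour t) (h : mutStep t s) :
    IsMarkovFour s := by
  have hs : markovQuantity s = 4 := (markovQuantity_eq_of_mutStep h).trans ht.2.2.2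
  obtain ⟨x, y, z⟩ := t
  obtain ⟨hx, hy, hz, hQ⟩ := ht
  simp only [markovQuantity] at hQ
  rcases h with rfl | rfl | rfl
  · exact ⟨hx, hy, two_le_mul_sub_of_markov_eq_four hx hy hz hQ, hs⟩
  · exact ⟨hx, two_le_mul_sub_of_markov_eq_four hx hz hy (by linear_combination hQ), hz, hs⟩
  · exact ⟨two_le_mul_sub_of_markov_eq_four hy hz hx (by linear_combination hQ), hy, hz, hs⟩

lemma IsMarkovFour.of_reflTransGen {t s : ℤ × ℤ × ℤ} (ht : IsMarkovFour t)
    (h : ReflTransGen mutStep t s) : IsMarkovFour s := by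
  induction h with
  | refl => exact ht
  | tail _ hstep ih => exact ih.of_mutStep hstep

lemma IsMarkovFour.mutationCyclic {t : ℤ × ℤ × ℤ} (ht : IsMarkovFour t) : MutationCyclic t := by
  rintro ⟨s, hts, hs⟩
  obtain ⟨h1, h2, h3, -⟩ := ht.of_reflTransGen hts
  omega

lemma MutationAcyclic.of_reflTransGen {t s : ℤ × ℤ × ℤ} (h : ReflTransGen mutStep t s)
    (hs : MutationAcyclic s) : MutationAcyclic t :=
  let ⟨u, hsu, hu⟩ := hs
  ⟨u, h.trans hsu, hu⟩

theorem mutationAcyclic_two_of_lt {y z : ℤ} (hyz : y < z) : MutationAcyclic (2, y, z) := by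
  by_cases hy : y ≤ 0
  · exact ⟨_, .refl, Or.inr (Or.inl hy)⟩
  have hlast : mutStep (2, y, z) (2, y, 2 * y - z) := Or.inl rfl
  have hmiddle : mutStep (2, y, 2 * y - z) (2, 2 * (2 * y - z) - y, 2 * y - z) :=
    Or.inr (Or.inl rfl)
  exact MutationAcyclic.of_reflTransGen (.tail (.single hlast) hmiddle)
    (mutationAcyclic_two_of_lt (by omega))
termination_by y.toNat
decreasing_by omega

theorem stmt_8 (b c : ℤ) (hb : 2 ≤ b) (hbc : b ≤ c) :
    MutationCyclic (2, b, c) ↔ b = c := by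
  refine ⟨fun h => ?_, ?_⟩
  · by_contra hne
    exact h (mutationAcyclic_two_of_lt (lt_of_le_of_ne hbc hne))
  · rintro rfl
    exact IsMarkovFour.mutationCyclic ⟨le_rfl, hb, hb, by simp only [markovQuantity]; ring⟩
end

section
/- Let a, b, c be integers with 2 ≤ a ≤ b ≤ c and c ≤ ab − b. Then ab − c ≥ b, and the triple (a, b, c) is mutation-cyclic; in fact either (a,b,c) or the mutated triple (a, b, ab−c) (reordered) is a root, i.e. satisfies x y ≥ 2z for its ordered entries x ≤ y ≤ z. -/
/-- A root is a triple whose entries, ordered increasingly as `x ≤ y ≤ z`,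
satisfy `2 ≤ x` and `x * y ≥ 2 * z`. -/
def IsRoot (t : ℤ × ℤ × ℤ) : Prop :=
  ∃ x y z : ℤ, 2 ≤ x ∧ x ≤ y ∧ y ≤ z ∧ x * y ≥ 2 * z ∧
    ({x, y, z} : Multiset ℤ) = {t.1, t.2.1, t.2.2}

/-- Invariant class: all entries at least 2, Markov invariant at most 4. -/
def Good_s9 (t : ℤ × ℤ × ℤ) : Prop :=
  2 ≤ t.1 ∧ 2 ≤ t.2.1 ∧ 2 ≤ t.2.2 ∧
    t.1^2 + t.2.1^2 + t.2.2^2 - t.1 * t.2.1 * t.2.2 ≤ 4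

lemma aux_ge (p q r : ℤ) (hp : 2 ≤ p) (hq : 2 ≤ q) (hr : 2 ≤ r)
    (hC : p^2 + q^2 + r^2 - p*q*r ≤ 4) : 2 ≤ p*q - r := by
  by_contra hcon
  push_neg at hcon
  have h1 : 0 ≤ r - p*q + 1 := by linarith
  have h0 : 0 ≤ (r - p*q) * (r - p*q + 1) := by
    rcases le_or_gt 0 (r - p*q) with h' | h'
    · nlinarith
    · nlinarith [show r - p*q + 1 ≤ 0 by omega]
  nlinarith [sq_nonneg (p - q), mul_nonneg (show (0:ℤ) ≤ p*q - 1 by nlinarith) h1]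

lemma good_step_s9 {t s : ℤ × ℤ × ℤ} (h : mutStep t s) (ht : Good_s9 t) : Good_s9 s := by
  obtain ⟨p, q, r⟩ := t
  obtain ⟨hp, hq, hr, hC⟩ := ht
  simp only at hp hq hr hC
  rcases h with rfl | rfl | rfl
  · refine ⟨hp, hq, aux_ge p q r hp hq hr hC, ?_⟩
    simp only
    nlinarith [hC]
  · refine ⟨hp, ?_, hr, ?_⟩
    · have := aux_ge p r q hp hr hq (by linarith [hC, (by ring_nf : p^2+r^2+q^2-p*r*q = p^2+q^2+r^2-p*q*r)])
      simpa using this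
    · simp only
      nlinarith [hC]
  · refine ⟨?_, hq, hr, ?_⟩
    · have := aux_ge q r p hq hr hp (by nlinarith [hC])
      simpa using this
    · simp only
      nlinarith [hC]

lemma good_reach {t s : ℤ × ℤ × ℤ} (h : Relation.ReflTransGen mutStep t s)
    (ht : Good_s9 t) : Good_s9 s := by
  induction h with
  | refl => exact ht
  | tail _ hstep ih => exact good_step_s9 hstep ih

lemma good_cyclic {t : ℤ × ℤ × ℤ} (ht : Good_s9 t) : MutationCyclic t := by
  rintro ⟨s, hreach, hs⟩
  obtain ⟨h1, h2, h3, -⟩ := good_reach hreach ht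
  rcases hs with h | h | h <;> linarith

theorem stmt_9 (a b c : ℤ) (ha : 2 ≤ a) (hab : a ≤ b) (hbc : b ≤ c)
    (h : c ≤ a * b - b) :
    a * b - c ≥ b ∧ MutationCyclic (a, b, c) ∧
      (IsRoot (a, b, c) ∨ IsRoot (a, b, a * b - c)) := by
  have hb : 2 ≤ b := le_trans ha hab
  have hc : 2 ≤ c := le_trans hb hbc
  have hd : a * b - c ≥ b := by linarith
  have hba2 : (0:ℤ) ≤ a + 2 → a + 2 ≤ b*b := fun _ => by nlinarith
  have hC : a^2 + b^2 + c^2 - a*b*c ≤ 4 := by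
    nlinarith [mul_nonneg (show (0:ℤ) ≤ c - b by linarith) (show (0:ℤ) ≤ a*b - b - c by linarith),
      mul_nonneg (show (0:ℤ) ≤ a - 2 by linarith) (show (0:ℤ) ≤ b*b - a - 2 by nlinarith),
      sq_nonneg (b - c)]
  refine ⟨hd, good_cyclic ⟨ha, hb, hc, by simpa using hC⟩, ?_⟩
  rcases le_or_gt (2*c) (a*b) with hle | hlt
  · exact Or.inl ⟨a, b, c, ha, hab, hbc, by linarith, rfl⟩
  · exact Or.inr ⟨a, b, a*b - c, ha, hab, by linarith, by linarith, rfl⟩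
end

section
/- Let a, b, c be integers with 2 ≤ a ≤ b ≤ c and c ≥ ab − 1. Then ab − c ≤ 1, and the triple (a, b, c) is mutation-acyclic. -/
theorem stmt_10 (a b c : ℤ) (ha : 2 ≤ a) (hab : a ≤ b) (hbc : b ≤ c)
    (h : c ≥ a * b - 1) :
    a * b - c ≤ 1 ∧ MutationAcyclic (a, b, c) := by
  refine ⟨by omega, ?_⟩
  have h1 : mutStep (a, b, c) (a, b, a * b - c) := Or.inl rfl
  rcases le_or_gt (a * b - c) 0 with hc | hc
  · exact ⟨(a, b, a * b - c), Relation.ReflTransGen.single h1, Or.inr (Or.inr hc)⟩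
  · have hcb : a * b - c = 1 := by omega
    refine ⟨(a, a * (a * b - c) - b, a * b - c),
      Relation.ReflTransGen.head h1 (Relation.ReflTransGen.single (Or.inr (Or.inl rfl))),
      Or.inr (Or.inl ?_)⟩
    simp only [hcb]
    omega
end

section
/- Let a, c be integers with 2 ≤ a ≤ c. The cyclic triple (a, a, c) is mutation-cyclic if and only if c ≤ a² − 2. In particular, for the family (a, a, c) the threshold c₀ of Theorem B equals a² − 2. -/
/-- Invariant: all entries ≥ 2 and the Markov-type quantity is ≤ 4. -/
def MarkovInv (t : ℤ × ℤ × ℤ) : Prop :=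
  2 ≤ t.1 ∧ 2 ≤ t.2.1 ∧ 2 ≤ t.2.2 ∧
  t.1 ^ 2 + t.2.1 ^ 2 + t.2.2 ^ 2 - t.1 * t.2.1 * t.2.2 ≤ 4

lemma key_s15 (x y z : ℤ) (hx : 2 ≤ x) (hy : 2 ≤ y) (hz : 2 ≤ z)
    (hM : x ^ 2 + y ^ 2 + z ^ 2 - x * y * z ≤ 4) : 2 ≤ x * y - z := by
  by_contra h
  push_neg at h
  -- z ≥ x*y - 1
  have h1 : x * y - 1 ≤ z := by linarith
  rcases le_or_gt (x * y) z with h2 | h2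
  · nlinarith [sq_nonneg (x - y), mul_nonneg (by linarith : (0:ℤ) ≤ z) (by linarith : (0:ℤ) ≤ z - x * y)]
  · have hz' : z = x * y - 1 := by omega
    subst hz'
    nlinarith [sq_nonneg (x - y)]

lemma inv_step {t s : ℤ × ℤ × ℤ} (ht : MarkovInv t) (h : mutStep t s) : MarkovInv s := by
  obtain ⟨x, y, z⟩ := t
  obtain ⟨h1, h2, h3, h4⟩ := ht
  simp only at h1 h2 h3 h4
  rcases h with rfl | rfl | rfl
  · exact ⟨h1, h2, key_s15 x y z h1 h2 h3 h4, by simp only; nlinarith⟩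
  · refine ⟨h1, ?_, h3, by simp only; nlinarith⟩
    have := key_s15 x z y h1 h3 h2 (by nlinarith)
    simpa [mul_comm] using this
  · refine ⟨?_, h2, h3, by simp only; nlinarith⟩
    have := key_s15 y z x h2 h3 h1 (by nlinarith)
    simpa [mul_comm] using this

theorem stmt_15 (a c : ℤ) (ha : 2 ≤ a) (hac : a ≤ c) :
    MutationCyclic (a, a, c) ↔ c ≤ a ^ 2 - 2 := by
  constructor
  · intro hcyc
    by_contra hc
    push_neg at hc
    apply hcyc
    rcases le_or_gt (a ^ 2) c with h | h
    · refine ⟨(a, a, a * a - c), Relation.ReflTransGen.single (Or.inl rfl), ?_⟩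
      right; right; simp only
      nlinarith
    · have hc' : c = a ^ 2 - 1 := by omega
      refine ⟨(a, a * (a * a - c) - a, a * a - c), ?_, ?_⟩
      · exact Relation.ReflTransGen.head (Or.inl rfl)
          (Relation.ReflTransGen.single (Or.inr (Or.inl rfl)))
      · right; left; simp only
        nlinarith
  · intro hc ⟨s, hreach, hneg⟩
    have hinv : MarkovInv s := by
      clear hneg
      induction hreach with
      | refl =>
        refine ⟨ha, ha, by linarith, ?_⟩
        simp only
        nlinarith [mul_nonneg (by linarith : (0:ℤ) ≤ c - 2) (by linarith : (0:ℤ) ≤ a ^ 2 - 2 - c)]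
      | tail _ hstep ih => exact inv_step ih hstep
    obtain ⟨i1, i2, i3, _⟩ := hinv
    rcases hneg with h | h | h <;> omega
end
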